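/- Let F : Γ → ℝ be smooth, symmetric, monotone (∂F/∂κ_i > 0) and concave on the symmetric convex cone Γ ⊂ ℝⁿ. If κ ∈ Γ satisfies κ₁ ≤ κ₂ ≤ ... ≤ κₙ, then the partial derivatives satisfy F^{nn} ≤ F^{n-1,n-1} ≤ ... ≤ F^{11}, where F^{ii} = ∂F/∂κ_i. -/

import Mathlib

open Filter Topology

/-- Gradient inequality for concave functions. -/
lemma concave_grad_ineq {E : Type*} [NormedAddCommGroup E] [NormedSpace ℝ E]
    {s : Set E} {f : E → ℝ} (hconc : ConcaveOn ℝ s f)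
    {x y : E} (hx : x ∈ s) (hy : y ∈ s) {D : E →L[ℝ] ℝ}
    (hD : HasFDerivAt f D x) : f y - f x ≤ D (y - x) := by
  set v := y - x with hv
  have hg : HasDerivAt (fun t : ℝ => f (x + t • v)) (D v) 0 := by
    have h1 : HasDerivAt (fun t : ℝ => x + t • v) v 0 := by
      simpa using ((hasDerivAt_id (0:ℝ)).smul_const v).const_add x
    have hD' : HasFDerivAt f D (x + (0:ℝ) • v) := by simpa using hD
    exact hD'.comp_hasDerivAt 0 h1
  have hslope : Tendsto (slope (fun t : ℝ => f (x + t • v)) 0) (𝓝[>] 0) (𝓝 (D v)) :=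
    (hasDerivAt_iff_tendsto_slope.1 hg).mono_left
      (nhdsWithin_mono 0 (fun t ht => ne_of_gt ht))
  refine ge_of_tendsto hslope ?_
  filter_upwards [Ioc_mem_nhdsGT one_pos] with t ht
  have h0 : (0:ℝ) < t := ht.1
  have h1 : t ≤ 1 := ht.2
  have hcomb : (1 - t) * f x + t * f y ≤ f (x + t • v) := by
    have := hconc.2 hx hy (by linarith : (0:ℝ) ≤ 1 - t) h0.le (by ring)
    simpa [smul_eq_mul, hv, show (1 - t) • x + t • y = x + t • (y - x) by module] using this
  rw [slope_def_field]
  simp only [zero_smul, add_zero, sub_zero]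
  rw [le_div_iff₀ h0]
  nlinarith [hcomb]

/-- Ecker–Huisken monotonicity of derivatives (4.29): for a smooth symmetric
monotone concave function `f` on a symmetric convex cone, at an ordered point
`κ₁ ≤ ... ≤ κₙ` the partial derivatives are reversely ordered:
`F^{nn} ≤ ... ≤ F^{11}`. -/
theorem stmt_9 (n : ℕ) (hn : 0 < n)
    (Γ : Set (Fin n → ℝ)) (hΓopen : IsOpen Γ) (hΓconv : Convex ℝ Γ)
    (hΓsymm : ∀ σ : Equiv.Perm (Fin n), ∀ κ ∈ Γ, (κ ∘ σ) ∈ Γ)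
    (hΓcone : ∀ κ ∈ Γ, ∀ s : ℝ, 0 < s → s • κ ∈ Γ)
    (f : (Fin n → ℝ) → ℝ) (hf : ContDiffOn ℝ (⊤ : ℕ∞) f Γ)
    (hfsymm : ∀ σ : Equiv.Perm (Fin n), ∀ κ ∈ Γ, f (κ ∘ σ) = f κ)
    (hmono : ∀ κ ∈ Γ, ∀ i, 0 < fderivWithin ℝ f Γ κ (Pi.single i 1))
    (hconc : ConcaveOn ℝ Γ f)
    (κ : Fin n → ℝ) (hκ : κ ∈ Γ) (hord : Monotone κ) :
    ∀ i j : Fin n, i ≤ j →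
      fderivWithin ℝ f Γ κ (Pi.single j 1) ≤ fderivWithin ℝ f Γ κ (Pi.single i 1) := by
  intro i j hij
  rcases eq_or_lt_of_le hij with rfl | hij'
  · exact le_refl _
  have hne : i ≠ j := ne_of_lt hij'
  -- differentiability at κ
  have hdiff : DifferentiableAt ℝ f κ :=
    ((hf.contDiffAt (hΓopen.mem_nhds hκ)).differentiableAt (by simp))
  set D := fderiv ℝ f κ with hD
  have hfd : HasFDerivAt f D κ := hdiff.hasFDerivAt
  have hfw : fderivWithin ℝ f Γ κ = D := fderivWithin_of_isOpen hΓopen hκ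
  rw [hfw]
  set σ := Equiv.swap i j with hσ
  have hκi : κ i ≤ κ j := hord hij
  rcases eq_or_lt_of_le hκi with heq | hlt
  · -- equal eigenvalues: derivative symmetric
    have hκσ : κ ∘ σ = κ := by
      funext k
      simp only [Function.comp_apply, hσ, Equiv.swap_apply_def]
      split_ifs with h1 h2 <;> simp_all
    let P : (Fin n → ℝ) →L[ℝ] (Fin n → ℝ) :=
      (LinearMap.funLeft ℝ ℝ σ).toContinuousLinearMap
    have hP : ∀ v : Fin n → ℝ, P v = v ∘ σ := fun v => rfl
    have hPκ : P κ = κ := by rw [hP, hκσ]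
    have hcomp : HasFDerivAt (f ∘ P) (D.comp P) κ := by
      have : HasFDerivAt f D (P κ) := by rw [hPκ]; exact hfd
      exact this.comp κ (P.hasFDerivAt)
    have heqn : f ∘ P =ᶠ[nhds κ] f := by
      filter_upwards [hΓopen.mem_nhds hκ] with x hx
      exact hfsymm σ x hx
    have hfd2 : HasFDerivAt f (D.comp P) κ := hcomp.congr_of_eventuallyEq heqn.symm
    have hDeq : D.comp P = D := hfd2.unique hfd
    have hsingle : (Pi.single i 1 : Fin n → ℝ) ∘ σ = Pi.single j 1 := by
      funext k
      simp only [Function.comp_apply, Pi.single_apply, hσ, Equiv.swap_apply_def]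
      split_ifs <;> simp_all
    have key : D (Pi.single j 1) = D (Pi.single i 1) := by
      calc D (Pi.single j 1) = D ((Pi.single i 1 : Fin n → ℝ) ∘ σ) := by rw [hsingle]
        _ = (D.comp P) (Pi.single i 1) := by rw [ContinuousLinearMap.comp_apply, hP]
        _ = D (Pi.single i 1) := by rw [hDeq]
    exact key.le
  · -- strict inequality: use concavity
    have hκ' : (κ ∘ σ) ∈ Γ := hΓsymm σ κ hκ
    have hfeq : f (κ ∘ σ) = f κ := hfsymm σ κ hκ
    have hgrad := concave_grad_ineq hconc hκ hκ' hfd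
    rw [hfeq, sub_self] at hgrad
    have hvec : (κ ∘ σ) - κ = (κ j - κ i) • (Pi.single i 1 - Pi.single j 1 : Fin n → ℝ) := by
      funext k
      simp only [Pi.sub_apply, Function.comp_apply, Pi.smul_apply, Pi.single_apply,
        smul_eq_mul, hσ, Equiv.swap_apply_def]
      split_ifs <;> simp_all <;> ring
    rw [hvec, map_smul, map_sub] at hgrad
    have hpos : (0:ℝ) < κ j - κ i := by linarith
    have hgrad' : 0 ≤ (κ j - κ i) * (D (Pi.single i 1) - D (Pi.single j 1)) := by
      simpa [smul_eq_mul] using hgrad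
    nlinarith [hgrad']
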